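/- arXiv:2006.12562 — 2 statements merged into one kernel-verified Lean document; each statement's English description precedes it below -/
import Mathlib

section
/- For any graph G with n vertices and maximum independent set size α, if for some k ≤ α-1 we have i_{k+1} > i_k, then k < α(n-1)/(α+n). -/
/-!
For weights `x ≥ 0` on the vertices put `I_k(x) = ∑_{A independent, |A| = k} ∏_{v ∈ A} x v`.
We show `α (k+1) I_{k+1}(x) ≤ (∑ x) (α - k) I_k(x)`. For adjacent `u`, `v` no independent set
contains both, so moving weight between `u` and `v` changes both sides affinely while keeping
`∑ x`; it therefore suffices to check the two endpoints, where the support is smaller. On weights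
supported on an independent set `S` the claim reads `α (k+1) e_{k+1} ≤ e_1 (α - k) e_k`, which
follows from `|S| ≤ α` and the Newton-type inequality `|S| (k+1) e_{k+1} ≤ (|S| - k) e_1 e_k`;
the latter is Chebyshev's sum inequality for the oppositely ordered `x i` and `e_k(S \ {i})`.
Taking `x ≡ 1` gives `α (k+1) i_{k+1} ≤ n (α - k) i_k`, so `i_k < i_{k+1}` forces
`α (k+1) < n (α - k)`, which is `k < α (n - 1) / (α + n)`.
-/

open Finset

def IsIndepFinset {V : Type*} (G : SimpleGraph V) (s : Finset V) : Prop :=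
  ∀ a ∈ s, ∀ b ∈ s, ¬ G.Adj a b

open Classical in
noncomputable def indepCount {V : Type*} [Fintype V] (G : SimpleGraph V) (k : ℕ) : ℕ :=
  (Finset.univ.filter fun s : Finset V => s.card = k ∧ IsIndepFinset G s).card

section ElementarySymmetric

variable {ι R : Type*}

def esymmOn [CommRing R] (S : Finset ι) (x : ι → R) (t : ℕ) : R :=
  ∑ A ∈ S.powersetCard t, ∏ i ∈ A, x i

section CommRing

variable [CommRing R] {S : Finset ι} {x : ι → R} {i : ι}

@[simp]
lemma esymmOn_zero (S : Finset ι) (x : ι → R) : esymmOn S x 0 = 1 := by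
  simp [esymmOn]

lemma esymmOn_eq_zero_of_card_lt {t : ℕ} (h : #S < t) : esymmOn S x t = 0 := by
  rw [esymmOn, powersetCard_eq_empty.mpr h, sum_empty]

lemma esymmOn_insert_succ [DecidableEq ι] (hi : i ∉ S) (t : ℕ) :
    esymmOn (insert i S) x (t + 1) = esymmOn S x (t + 1) + x i * esymmOn S x t := by
  have hA : ∀ A ∈ S.powersetCard t, i ∉ A := fun A hA h => hi ((mem_powersetCard.mp hA).1 h)
  rw [esymmOn, powersetCard_succ_insert hi, sum_union, sum_image, esymmOn, esymmOn, mul_sum]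
  · exact congrArg _ (sum_congr rfl fun A hAS => prod_insert (hA A hAS))
  · exact fun A hAS B hBS hAB => by
      rw [← erase_insert (hA A hAS), ← erase_insert (hA B hBS), hAB]
  · refine disjoint_left.mpr fun A hAS hA' => ?_
    obtain ⟨B, -, rfl⟩ := mem_image.mp hA'
    exact hi ((mem_powersetCard.mp hAS).1 (mem_insert_self i B))

lemma esymmOn_succ_of_mem [DecidableEq ι] (hi : i ∈ S) (t : ℕ) :
    esymmOn S x (t + 1) = esymmOn (S.erase i) x (t + 1) + x i * esymmOn (S.erase i) x t := by
  conv_lhs => rw [← insert_erase hi]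
  exact esymmOn_insert_succ (notMem_erase i S) t

-- Each `t`-subset of `S` avoids exactly `#S - t` points of `S`.
lemma sum_esymmOn_erase_add [DecidableEq ι] (S : Finset ι) (x : ι → R) (t : ℕ) :
    ∑ i ∈ S, esymmOn (S.erase i) x t + t * esymmOn S x t = #S * esymmOn S x t := by
  have hswap : ∑ i ∈ S, esymmOn (S.erase i) x t
      = ∑ A ∈ S.powersetCard t, ∑ i ∈ S \ A, ∏ j ∈ A, x j := by
    simp only [esymmOn]
    refine sum_comm' fun i A => ?_
    simp only [mem_powersetCard, subset_erase, mem_sdiff]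
    tauto
  rw [hswap, esymmOn, mul_sum, mul_sum, ← sum_add_distrib]
  refine sum_congr rfl fun A hA => ?_
  obtain ⟨hAS, hAt⟩ := mem_powersetCard.mp hA
  rw [sum_const, nsmul_eq_mul, ← card_sdiff_add_card_eq_card hAS, hAt, Nat.cast_add, add_mul]

lemma sum_mul_esymmOn_erase [DecidableEq ι] (S : Finset ι) (x : ι → R) (t : ℕ) :
    ∑ i ∈ S, x i * esymmOn (S.erase i) x t = (t + 1) * esymmOn S x (t + 1) := by
  have h := sum_esymmOn_erase_add S x (t + 1)
  have hsucc : ∑ i ∈ S, x i * esymmOn (S.erase i) x t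
      = ∑ i ∈ S, (esymmOn S x (t + 1) - esymmOn (S.erase i) x (t + 1)) :=
    sum_congr rfl fun i hi => by rw [esymmOn_succ_of_mem hi t]; ring
  rw [hsucc, sum_sub_distrib, sum_const, nsmul_eq_mul]
  push_cast at h
  linear_combination -h

end CommRing

section Ordered

variable [CommRing R] [LinearOrder R] [IsStrictOrderedRing R] {S : Finset ι} {x : ι → R}

lemma esymmOn_nonneg (hx : 0 ≤ x) (S : Finset ι) (t : ℕ) : 0 ≤ esymmOn S x t :=
  sum_nonneg fun _ _ => prod_nonneg fun i _ => hx i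

lemma antivaryOn_esymmOn_erase [DecidableEq ι] (hx : 0 ≤ x) (t : ℕ) :
    AntivaryOn x (fun i => esymmOn (S.erase i) x t) S := by
  intro i hi j hj hlt
  cases t with
  | zero => simp at hlt
  | succ t =>
    have hij : i ≠ j := by rintro rfl; exact hlt.false
    have hdiff : esymmOn (S.erase i) x (t + 1) - esymmOn (S.erase j) x (t + 1)
        = (x j - x i) * esymmOn ((S.erase i).erase j) x t := by
      rw [esymmOn_succ_of_mem (mem_erase.mpr ⟨hij.symm, hj⟩),
        esymmOn_succ_of_mem (mem_erase.mpr ⟨hij, hi⟩), erase_right_comm]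
      ring
    have hE := esymmOn_nonneg hx ((S.erase i).erase j) t
    by_contra! hji
    have : 0 ≤ (x j - x i) * esymmOn ((S.erase i).erase j) x t :=
      mul_nonneg (sub_nonneg.mpr hji.le) hE
    simp only at hlt
    linarith

lemma card_mul_esymmOn_succ_le [DecidableEq ι] (hx : 0 ≤ x) (t : ℕ) :
    #S * ((t + 1) * esymmOn S x (t + 1)) ≤ (∑ i ∈ S, x i) * ((#S - t) * esymmOn S x t) := by
  have hcheb := (antivaryOn_esymmOn_erase (S := S) hx t).card_mul_sum_le_sum_mul_sum
  rwa [sum_mul_esymmOn_erase, eq_sub_of_add_eq (sum_esymmOn_erase_add S x t), ← sub_mul]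
    at hcheb

lemma esymmOn_succ_le [DecidableEq ι] {α t : ℕ} (hS : #S ≤ α) (ht : t ≤ α)
    (hx : 0 ≤ x) :
    α * (t + 1) * esymmOn S x (t + 1) ≤ (∑ i ∈ S, x i) * (α - t) * esymmOn S x t := by
  have hαt : (0 : R) ≤ α - t := sub_nonneg.mpr (by exact_mod_cast ht)
  have hrhs : 0 ≤ (∑ i ∈ S, x i) * esymmOn S x t :=
    mul_nonneg (sum_nonneg fun i _ => hx i) (esymmOn_nonneg hx S t)
  rcases lt_or_ge t #S with hts | hts
  · have hS0 : (0 : R) < #S := by exact_mod_cast hts.trans_le' (Nat.zero_le t)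
    have hSα : (#S : R) ≤ α := by exact_mod_cast hS
    refine le_of_mul_le_mul_left ?_ hS0
    calc #S * (α * (t + 1) * esymmOn S x (t + 1))
        = α * (#S * ((t + 1) * esymmOn S x (t + 1))) := by ring
      _ ≤ α * ((∑ i ∈ S, x i) * ((#S - t) * esymmOn S x t)) :=
        mul_le_mul_of_nonneg_left (card_mul_esymmOn_succ_le hx t) (Nat.cast_nonneg α)
      _ ≤ #S * ((∑ i ∈ S, x i) * (α - t) * esymmOn S x t) := by
        nlinarith [mul_nonneg (mul_nonneg (sub_nonneg.mpr hSα) (Nat.cast_nonneg t)) hrhs]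
  · rw [esymmOn_eq_zero_of_card_lt (Nat.lt_succ_of_le hts), mul_zero, mul_right_comm]
    exact mul_nonneg hrhs hαt

end Ordered

end ElementarySymmetric

lemma IsIndepFinset.subset {V : Type*} {G : SimpleGraph V} {s t : Finset V}
    (ht : IsIndepFinset G t) (hst : s ⊆ t) : IsIndepFinset G s :=
  fun a ha b hb => ht a (hst ha) b (hst hb)

section MoveWeight

variable {V R : Type*} [DecidableEq V] [CommRing R]

/-- `moveWeight x v u` moves the weight of `v` onto `u`. -/
def moveWeight (x : V → R) (v u : V) : V → R :=
  Function.update (Function.update x u (x u + x v)) v 0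

variable {x : V → R} {u v : V}

lemma moveWeight_apply_of_ne {w : V} (hwu : w ≠ u) (hwv : w ≠ v) :
    moveWeight x v u w = x w := by
  rw [moveWeight, Function.update_of_ne hwv, Function.update_of_ne hwu]

lemma moveWeight_apply_right (huv : u ≠ v) : moveWeight x v u u = x u + x v := by
  rw [moveWeight, Function.update_of_ne huv, Function.update_self]

@[simp]
lemma moveWeight_apply_left : moveWeight x v u v = 0 :=
  Function.update_self ..

lemma moveWeight_nonneg [LinearOrder R] [IsStrictOrderedRing R] (hx : 0 ≤ x) :
    0 ≤ moveWeight x v u := by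
  intro w
  unfold moveWeight
  rcases eq_or_ne w v with rfl | hwv
  · simp
  rcases eq_or_ne w u with rfl | hwu
  · simpa [hwv] using add_nonneg (hx w) (hx v)
  · simpa [hwv, hwu] using hx w

lemma moveWeight_eq_add_single_sub_single (huv : u ≠ v) :
    moveWeight x v u = x + Pi.single u (x v) - Pi.single v (x v) := by
  ext w
  rcases eq_or_ne w v with rfl | hwv
  · simp [huv.symm]
  rcases eq_or_ne w u with rfl | hwu
  · simp [moveWeight_apply_right huv, hwv]
  · simp [moveWeight_apply_of_ne hwu hwv, hwu, hwv]

lemma sum_moveWeight [Fintype V] (huv : u ≠ v) : ∑ w, moveWeight x v u w = ∑ w, x w := by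
  simp [moveWeight_eq_add_single_sub_single huv, sum_add_distrib, sum_sub_distrib]

lemma moveWeight_eq_zero_of_notMem {S : Finset V} (hxS : ∀ w ∉ S, x w = 0) (hu : u ∈ S)
    {w : V} (hw : w ∉ S.erase v) : moveWeight x v u w = 0 := by
  rcases eq_or_ne w v with rfl | hwv
  · exact moveWeight_apply_left
  have hwS : w ∉ S := fun h => hw (mem_erase.mpr ⟨hwv, h⟩)
  rw [moveWeight_apply_of_ne (by rintro rfl; exact hwS hu) hwv, hxS w hwS]

lemma prod_moveWeight_of_mem {A : Finset V} (hu : u ∈ A) (hv : v ∉ A) :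
    ∏ w ∈ A, moveWeight x v u w = (x u + x v) * ∏ w ∈ A.erase u, x w := by
  have huv : u ≠ v := fun h => hv (h ▸ hu)
  rw [← mul_prod_erase A _ hu, moveWeight_apply_right huv]
  refine congrArg _ (prod_congr rfl fun _ hw => moveWeight_apply_of_ne (ne_of_mem_erase hw) ?_)
  exact fun h => hv (h ▸ mem_of_mem_erase hw)

lemma prod_moveWeight_of_notMem {A : Finset V} (hu : u ∉ A) (hv : v ∉ A) :
    ∏ w ∈ A, moveWeight x v u w = ∏ w ∈ A, x w :=
  prod_congr rfl fun _ hw =>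
    moveWeight_apply_of_ne (fun h => hu (h ▸ hw)) (fun h => hv (h ▸ hw))

lemma add_mul_prod_eq_moveWeight {A : Finset V} (huv : ¬(u ∈ A ∧ v ∈ A)) :
    (x u + x v) * ∏ w ∈ A, x w
      = x u * ∏ w ∈ A, moveWeight x v u w + x v * ∏ w ∈ A, moveWeight x u v w := by
  by_cases hu : u ∈ A
  · have hv : v ∉ A := fun hv => huv ⟨hu, hv⟩
    rw [prod_moveWeight_of_mem hu hv,
      prod_eq_zero (f := moveWeight x u v) hu moveWeight_apply_left, ← mul_prod_erase A x hu]
    ring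
  by_cases hv : v ∈ A
  · rw [prod_moveWeight_of_mem hv hu,
      prod_eq_zero (f := moveWeight x v u) hv moveWeight_apply_left, ← mul_prod_erase A x hv]
    ring
  · rw [prod_moveWeight_of_notMem hu hv, prod_moveWeight_of_notMem hv hu]
    ring

end MoveWeight

section WeightedCount

variable {V R : Type*} [Fintype V] (G : SimpleGraph V)

open Classical in
noncomputable def indepFamily (k : ℕ) : Finset (Finset V) :=
  univ.filter fun s : Finset V => s.card = k ∧ IsIndepFinset G s

variable {G}

lemma mem_indepFamily {k : ℕ} {s : Finset V} :
    s ∈ indepFamily G k ↔ #s = k ∧ IsIndepFinset G s := by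
  classical
  simp [indepFamily]

variable (G) [CommRing R]

noncomputable def weightedIndepCount (k : ℕ) (x : V → R) : R :=
  ∑ A ∈ indepFamily G k, ∏ v ∈ A, x v

lemma weightedIndepCount_one (k : ℕ) : weightedIndepCount G k (1 : V → R) = indepCount G k := by
  simp [weightedIndepCount, indepFamily, indepCount]

variable {G}

lemma weightedIndepCount_eq_esymmOn [DecidableEq V] {S : Finset V} (hS : IsIndepFinset G S)
    {x : V → R} (hxS : ∀ v ∉ S, x v = 0) (k : ℕ) :
    weightedIndepCount G k x = esymmOn S x k := by
  refine (sum_subset (fun A hA => ?_) fun A hA hAS => ?_).symm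
  · obtain ⟨hAS, hAk⟩ := mem_powersetCard.mp hA
    exact mem_indepFamily.mpr ⟨hAk, hS.subset hAS⟩
  · have hAS : ¬A ⊆ S := fun h => hAS (mem_powersetCard.mpr ⟨h, (mem_indepFamily.mp hA).1⟩)
    obtain ⟨w, hwA, hwS⟩ := not_subset.mp hAS
    exact prod_eq_zero hwA (hxS w hwS)

lemma add_mul_weightedIndepCount [DecidableEq V] {u v : V} (huv : G.Adj u v) (x : V → R)
    (k : ℕ) :
    (x u + x v) * weightedIndepCount G k x
      = x u * weightedIndepCount G k (moveWeight x v u)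
        + x v * weightedIndepCount G k (moveWeight x u v) := by
  simp only [weightedIndepCount, mul_sum, ← sum_add_distrib]
  refine sum_congr rfl fun A hA => add_mul_prod_eq_moveWeight fun ⟨hu, hv⟩ => ?_
  exact (mem_indepFamily.mp hA).2 u hu v hv huv

end WeightedCount

section Main

variable {V R : Type*} [Fintype V] [CommRing R] [LinearOrder R] [IsStrictOrderedRing R]
  {G : SimpleGraph V} {α t : ℕ}

theorem weightedIndepCount_succ_le (hα : ∀ s : Finset V, IsIndepFinset G s → #s ≤ α)
    (ht : t ≤ α) {x : V → R} (hx : 0 ≤ x) :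
    α * (t + 1) * weightedIndepCount G (t + 1) x
      ≤ (∑ v, x v) * (α - t) * weightedIndepCount G t x := by
  classical
  suffices H : ∀ S : Finset V, ∀ x : V → R, 0 ≤ x → (∀ v ∉ S, x v = 0) →
      α * (t + 1) * weightedIndepCount G (t + 1) x
        ≤ (∑ v, x v) * (α - t) * weightedIndepCount G t x from
    H univ x hx fun v hv => absurd (mem_univ v) hv
  intro S
  induction S using Finset.strongInduction with
  | H S ih =>
  intro x hx hxS
  by_cases hS : IsIndepFinset G S
  · rw [weightedIndepCount_eq_esymmOn hS hxS, weightedIndepCount_eq_esymmOn hS hxS,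
      ← sum_subset (subset_univ S) fun v _ hv => hxS v hv]
    exact esymmOn_succ_le (hα S hS) ht hx
  obtain ⟨u, hu, v, hv, huv⟩ : ∃ u ∈ S, ∃ v ∈ S, G.Adj u v := by
    simpa [IsIndepFinset] using hS
  by_cases hv0 : x v = 0
  · refine ih (S.erase v) (erase_ssubset hv) x hx fun w hw => ?_
    rcases eq_or_ne w v with rfl | hwv
    · exact hv0
    · exact hxS w fun hwS => hw (mem_erase.mpr ⟨hwv, hwS⟩)
  have hmove {u v : V} (hu : u ∈ S) (hv : v ∈ S) (huv : u ≠ v) :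
      α * (t + 1) * weightedIndepCount G (t + 1) (moveWeight x v u)
        ≤ (∑ v, x v) * (α - t) * weightedIndepCount G t (moveWeight x v u) := by
    rw [← sum_moveWeight huv]
    exact ih (S.erase v) (erase_ssubset hv) _ (moveWeight_nonneg hx)
      fun w hw => moveWeight_eq_zero_of_notMem hxS hu hw
  have hpos : 0 < x u + x v := add_pos_of_nonneg_of_pos (hx u) ((hx v).lt_of_ne' hv0)
  refine le_of_mul_le_mul_left ?_ hpos
  calc (x u + x v) * (α * (t + 1) * weightedIndepCount G (t + 1) x)
      = x u * (α * (t + 1) * weightedIndepCount G (t + 1) (moveWeight x v u))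
        + x v * (α * (t + 1) * weightedIndepCount G (t + 1) (moveWeight x u v)) := by
        linear_combination (α * (t + 1) : R) * add_mul_weightedIndepCount huv x (t + 1)
    _ ≤ x u * ((∑ v, x v) * (α - t) * weightedIndepCount G t (moveWeight x v u))
        + x v * ((∑ v, x v) * (α - t) * weightedIndepCount G t (moveWeight x u v)) :=
        add_le_add (mul_le_mul_of_nonneg_left (hmove hu hv huv.ne) (hx u))
          (mul_le_mul_of_nonneg_left (hmove hv hu huv.ne.symm) (hx v))
    _ = (x u + x v) * ((∑ v, x v) * (α - t) * weightedIndepCount G t x) := by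
        linear_combination (-(∑ v, x v) * (α - t) : R) * add_mul_weightedIndepCount huv x t

theorem indepCount_succ_le (hα : ∀ s : Finset V, IsIndepFinset G s → #s ≤ α)
    (ht : t ≤ α) :
    α * (t + 1) * (indepCount G (t + 1) : R) ≤ Fintype.card V * (α - t) * indepCount G t := by
  simpa [weightedIndepCount_one] using
    weightedIndepCount_succ_le (R := R) hα ht (x := 1) zero_le_one

end Main

theorem stmt_8 {V : Type*} [Fintype V] (G : SimpleGraph V) (n α : ℕ)
    (hn : n = Fintype.card V)
    (hα : IsGreatest {m | ∃ s : Finset V, IsIndepFinset G s ∧ s.card = m} α) :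
    ∀ k : ℕ, k ≤ α - 1 → indepCount G k < indepCount G (k + 1) →
      (k : ℚ) < (α : ℚ) * ((n : ℚ) - 1) / ((α : ℚ) + (n : ℚ)) := by
  intro k _ hlt
  have hub : ∀ s : Finset V, IsIndepFinset G s → #s ≤ α := fun s hs => hα.2 ⟨s, hs, rfl⟩
  obtain ⟨B, hB⟩ : (indepFamily G (k + 1)).Nonempty := card_pos.mp (Nat.zero_lt_of_lt hlt)
  obtain ⟨hBk, hBind⟩ := mem_indepFamily.mp hB
  have hkα : k + 1 ≤ α := hBk ▸ hub B hBind
  have hn0 : 0 < n := hn ▸ (card_le_univ B).trans_lt' (by omega)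
  have hbound := indepCount_succ_le (R := ℚ) hub (by omega : k ≤ α)
  rw [← hn] at hbound
  have hcount : (indepCount G k : ℚ) < indepCount G (k + 1) := by exact_mod_cast hlt
  have hαk : (k : ℚ) + 1 ≤ α := by exact_mod_cast hkα
  have hn1 : (1 : ℚ) ≤ n := by exact_mod_cast hn0
  have key : (α : ℚ) * (k + 1) < n * (α - k) := by
    by_contra! h
    nlinarith [mul_lt_mul_of_pos_left hcount (by nlinarith : (0 : ℚ) < n * (α - k))]
  rw [lt_div_iff₀ (by positivity)]
  linarith
end

section
/- In a Kőnig–Egerváry graph G (one in which the number of vertices equals α + μ, where α is the independence number and μ is the maximum matching size), the independent set sequence satisfies i_{⌈(2α-1)/3⌉} ≥ i_{⌈(2α-1)/3⌉+1} ≥ ... ≥ i_α. -/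
/-!
Take an independent set `S` of size `α` and a matching `M` of size `μ = |V \ S|`. No edge of `M`
lies inside `S`, so sending each vertex outside `S` to its `M`-edge is onto the `μ` edges of `M`;
hence it is a bijection, and every vertex outside `S` is matched by `M` to a vertex of `S`.
For an independent set `A` of size `m` and the set `E` of vertices `v ∉ A` with `A + v`
independent, the `M`-partners inject `(A ∪ E) \ S` into `S \ A` and `A \ S` into
`S \ (A ∪ E)`; adding the two bounds gives `|E| ≤ 2(α - m)`. Double counting the pairs `A ⊂ B`
of independent sets of sizes `m` and `m + 1` then gives `(m + 1) i_{m+1} ≤ 2(α - m) i_m`, and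
`2(α - m) ≤ m + 1` as soon as `3m ≥ 2α - 1`.
-/

open Finset

section

variable {V : Type*} {G : SimpleGraph V}

theorem IsIndepFinset.mono {s t : Finset V} (ht : IsIndepFinset G t) (hst : s ⊆ t) :
    IsIndepFinset G s :=
  fun a ha b hb => ht a (hst ha) b (hst hb)

namespace SimpleGraph.Subgraph.IsMatching

variable {M : G.Subgraph} (hM : M.IsMatching)
include hM

theorem card_le_card_of_forall_exists_adj {X Y : Finset V} (h : ∀ v ∈ X, ∃ w ∈ Y, M.Adj v w) :
    #X ≤ #Y :=
  card_le_card_of_forall_subsingleton M.Adj (fun v hv => by simpa using h v hv)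
    fun _ _ _ hu _ hv => hM.eq_of_adj_right hu.2 hv.2

theorem exists_adj_mem_of_card_le [Fintype V] {S : Finset V} (hS : IsIndepFinset G S)
    (hcard : Fintype.card V ≤ #S + M.edgeSet.ncard) : ∀ v ∉ S, ∃ w ∈ S, M.Adj v w := by
  classical
  let edgeOf : {v : M.verts // (v : V) ∉ S} → M.edgeSet := fun v => hM.toEdge v.1
  have hsurj : Function.Surjective edgeOf := by
    rintro ⟨⟨x, y⟩, he⟩
    by_cases hx : x ∈ S
    · have hy : y ∉ S := fun hy => hS x hx y hy (M.adj_sub he)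
      refine ⟨⟨⟨y, he.snd_mem⟩, hy⟩, ?_⟩
      simp only [edgeOf, hM.toEdge_eq_of_adj he.symm, Sym2.eq_swap]
    · exact ⟨⟨⟨x, he.fst_mem⟩, hx⟩, hM.toEdge_eq_of_adj he⟩
  let incl : {v : M.verts // (v : V) ∉ S} → {v : V // v ∉ S} := fun v => ⟨v.1, v.2⟩
  have hincl : Function.Injective incl := fun u v h => by
    simpa [incl, Subtype.ext_iff] using h
  have hcompl : Nat.card {v : V // v ∉ S} ≤ Nat.card M.edgeSet := by
    rw [Nat.card_eq_fintype_card, Fintype.card_subtype_compl, Fintype.card_coe,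
      Nat.card_coe_set_eq]
    omega
  have hinj : Function.Injective edgeOf :=
    (hsurj.bijective_of_nat_card_le ((Nat.card_le_card_of_injective incl hincl).trans hcompl)).1
  have hcover : Function.Surjective incl :=
    (hincl.bijective_of_nat_card_le (hcompl.trans (Nat.card_le_card_of_surjective _ hsurj))).2
  intro v hv
  obtain ⟨⟨⟨u, hvM⟩, hu⟩, huv⟩ := hcover ⟨v, hv⟩
  obtain rfl : v = u := (congrArg Subtype.val huv).symm
  obtain ⟨w, hvw, -⟩ := hM hvM
  refine ⟨w, by_contra fun hw => hvw.ne ?_, hvw⟩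
  simpa using hinj (a₁ := ⟨⟨v, hvM⟩, hv⟩) (a₂ := ⟨⟨w, hvw.snd_mem⟩, hw⟩)
    (hM.toEdge_eq_toEdge_of_adj hvw)

theorem card_add_two_mul_card_le [DecidableEq V] {S A E : Finset V}
    (hSM : ∀ v ∉ S, ∃ w ∈ S, M.Adj v w) (hA : IsIndepFinset G A)
    (hE : ∀ v ∈ E, v ∉ A ∧ IsIndepFinset G (insert v A)) : #E + 2 * #A ≤ 2 * #S := by
  set B := A ∪ E
  have hB : ∀ v ∈ B, IsIndepFinset G (insert v A) := by
    intro v hv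
    rcases mem_union.1 hv with hvA | hvE
    · rwa [insert_eq_of_mem hvA]
    · exact (hE v hvE).2
  have hBS : #(B \ S) ≤ #(S \ A) := hM.card_le_card_of_forall_exists_adj fun v hv => by
    obtain ⟨hvB, hvS⟩ := mem_sdiff.1 hv
    obtain ⟨w, hwS, hvw⟩ := hSM v hvS
    refine ⟨w, mem_sdiff.2 ⟨hwS, fun hwA => ?_⟩, hvw⟩
    exact hB v hvB v (mem_insert_self _ _) w (mem_insert_of_mem hwA) (M.adj_sub hvw)
  have hAS : #(A \ S) ≤ #(S \ B) := hM.card_le_card_of_forall_exists_adj fun v hv => by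
    obtain ⟨hvA, hvS⟩ := mem_sdiff.1 hv
    obtain ⟨w, hwS, hvw⟩ := hSM v hvS
    refine ⟨w, mem_sdiff.2 ⟨hwS, fun hwB => ?_⟩, hvw⟩
    exact hB w hwB w (mem_insert_self _ _) v (mem_insert_of_mem hvA) (M.adj_sub hvw).symm
  have hBcard : #B = #A + #E := card_union_of_disjoint (disjoint_right.2 fun v hv => (hE v hv).1)
  have hB₁ := card_sdiff_add_card_inter B S
  have hB₂ := card_sdiff_add_card_inter S B
  have hA₁ := card_sdiff_add_card_inter A S
  have hA₂ := card_sdiff_add_card_inter S A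
  rw [inter_comm] at hB₂ hA₂
  omega

end SimpleGraph.Subgraph.IsMatching

theorem indepCount_succ_le_s9 [Fintype V] [DecidableEq V] {m : ℕ}
    (h : ∀ A E : Finset V, IsIndepFinset G A → #A = m →
      (∀ v ∈ E, v ∉ A ∧ IsIndepFinset G (insert v A)) → #E ≤ m + 1) :
    indepCount G (m + 1) ≤ indepCount G m := by
  classical
  refine Nat.le_of_mul_le_mul_right ?_ m.succ_pos
  refine card_mul_le_card_mul' (· ⊆ ·) (fun B hB => ?_) (fun A hA => ?_)
  · simp only [mem_filter, mem_univ, true_and] at hB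
    calc m + 1 = #(B.powersetCard m) := by rw [card_powersetCard, hB.1, Nat.choose_succ_self_right]
      _ ≤ _ := card_le_card fun A hA => by
        rw [mem_powersetCard] at hA
        simpa [mem_bipartiteBelow, hA.1, hA.2] using hB.2.mono hA.1
  · simp only [mem_filter, mem_univ, true_and] at hA
    set E := univ.filter fun v => v ∉ A ∧ IsIndepFinset G (insert v A)
    calc _ ≤ #(E.image (insert · A)) := card_le_card fun B hB => by
          simp only [mem_bipartiteAbove, mem_filter, mem_univ, true_and] at hB
          obtain ⟨v, hvA, rfl⟩ := exists_eq_insert_iff.2 ⟨hB.2, by rw [hA.1, hB.1.1]⟩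
          exact mem_image_of_mem _ (by simpa [E, hvA] using hB.1.2)
      _ ≤ #E := card_image_le
      _ ≤ m + 1 := h A E hA.2 hA.1 fun v hv => by simpa [E] using hv

end

theorem stmt_9 {V : Type*} [Fintype V] (G : SimpleGraph V) (n α μ : ℕ)
    (hn : n = Fintype.card V)
    (hα : IsGreatest {m | ∃ s : Finset V, IsIndepFinset G s ∧ s.card = m} α)
    (hμ : IsGreatest {m | ∃ M : G.Subgraph, M.IsMatching ∧ M.edgeSet.ncard = m} μ)
    (hKE : n = α + μ) :
    ∀ k l : ℕ, ⌈((2 * α - 1 : ℕ) : ℚ) / 3⌉₊ ≤ k → k ≤ l → l ≤ α →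
      indepCount G l ≤ indepCount G k := by
  classical
  intro k l hk hkl _
  obtain ⟨S, hS, rfl⟩ := hα.1
  obtain ⟨M, hM, hMcard⟩ := hμ.1
  have hSM := hM.exists_adj_mem_of_card_le hS (by omega)
  have hthreshold : 2 * #S ≤ 3 * k + 1 := by
    have hk' := Nat.ceil_le.1 hk
    rw [div_le_iff₀ (by norm_num)] at hk'
    have : 2 * #S - 1 ≤ k * 3 := by exact_mod_cast hk'
    omega
  have hanti : AntitoneOn (indepCount G) (Set.Ici k) :=
    antitoneOn_nat_Ici_of_succ_le fun m hm => indepCount_succ_le_s9 fun A E hA hAm hE => by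
      have := hM.card_add_two_mul_card_le hSM hA hE
      omega
  exact hanti (Set.mem_Ici.2 le_rfl) (Set.mem_Ici.2 hkl) hkl
end
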